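/- Let q be a complex number with |q| < 1, and for each integer k ≥ 0 set B₃(k) = √2·sin((2k+1)·3π/8)/sin(3π/8) + √2·sin((2k+1)π/8)/sin(π/8). Then ∑_{k=0}^∞ (−1)^k B₃(k) q^{k(k+1)/2} = 2√2 · ( ∑_{j=-∞}^∞ (−1)^j q^{8j²−2j} − q · ∑_{j=-∞}^∞ (−1)^j q^{8j²−6j} ). -/

import Mathlib

/-- The coefficient `B₃(k) = √2·sin((2k+1)·3π/8)/sin(3π/8) + √2·sin((2k+1)π/8)/sin(π/8)`. -/
noncomputable def B₃ (k : ℕ) : ℝ :=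
  Real.sqrt 2 * Real.sin ((2 * k + 1) * (3 * Real.pi) / 8) / Real.sin (3 * Real.pi / 8) +
    Real.sqrt 2 * Real.sin ((2 * k + 1) * Real.pi / 8) / Real.sin (Real.pi / 8)

open Real

/-! Since `B₃ k = 2√2 · (-1) ^ ⌊k/4⌋` (the base values `k < 4` reduce to
`cos (π/4) = sin (π/4)`), the left side is `2√2 ∑ (-1) ^ (k + ⌊k/4⌋) q ^ T k` with
`T k = k (k + 1) / 2`. Splitting `k` by its residue mod 4, `T (4n) = 8n² + 2n` and
`T (4n + 3) = 8(n+1)² - 2(n+1)` are the exponents of the first theta series at `j = -n` and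
`j = n + 1`, while `T (4n + 1)` and `T (4n + 2)` exceed by one those of the second series at
`j = -n` and `j = n + 1`; the signs match in each case. -/

lemma sin_three_pi_div_eight : sin (3 * π / 8) = cos (π / 8) := by
  rw [show 3 * π / 8 = π / 2 - π / 8 by ring, sin_pi_div_two_sub]

lemma sin_pi_div_eight_pos : 0 < sin (π / 8) :=
  sin_pos_of_pos_of_lt_pi (by positivity) (by linarith [pi_pos])

lemma cos_pi_div_eight_pos : 0 < cos (π / 8) :=
  cos_pos_of_mem_Ioo ⟨by linarith [pi_pos], by linarith [pi_pos]⟩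

lemma cos_sq_sub_sin_sq_pi_div_eight :
    cos (π / 8) ^ 2 - sin (π / 8) ^ 2 = 2 * sin (π / 8) * cos (π / 8) := by
  rw [← cos_two_mul', ← sin_two_mul, show 2 * (π / 8) = π / 4 by ring, cos_pi_div_four,
    sin_pi_div_four]

lemma B₃_add_four (k : ℕ) : B₃ (k + 4) = -B₃ k := by
  simp only [B₃]
  push_cast
  rw [show (2 * ((k : ℝ) + 4) + 1) * (3 * π) / 8 = (2 * k + 1) * (3 * π) / 8 + π + 2 * π by ring,
    show (2 * ((k : ℝ) + 4) + 1) * π / 8 = (2 * k + 1) * π / 8 + π by ring,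
    sin_add_two_pi, sin_add_pi, sin_add_pi]
  ring

lemma B₃_of_lt_four {k : ℕ} (hk : k < 4) : B₃ k = 2 * √2 := by
  have hs := sin_pi_div_eight_pos.ne'
  have hc := cos_pi_div_eight_pos.ne'
  interval_cases k
  all_goals simp only [B₃]; push_cast
  · rw [show (2 * 0 + 1) * (3 * π) / 8 = 3 * π / 8 by ring,
      show (2 * 0 + 1) * π / 8 = π / 8 by ring, sin_three_pi_div_eight]
    field_simp
    ring
  · rw [show (2 * 1 + 1) * (3 * π) / 8 = π / 8 + π by ring,
      show (2 * 1 + 1) * π / 8 = 3 * π / 8 by ring, sin_add_pi, sin_three_pi_div_eight]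
    field_simp
    linear_combination cos_sq_sub_sin_sq_pi_div_eight
  · rw [show (2 * 2 + 1) * (3 * π) / 8 = -(π / 8) + 2 * π by ring,
      show (2 * 2 + 1) * π / 8 = π - 3 * π / 8 by ring, sin_add_two_pi, sin_neg, sin_pi_sub,
      sin_three_pi_div_eight]
    field_simp
    linear_combination cos_sq_sub_sin_sq_pi_div_eight
  · rw [show (2 * 3 + 1) * (3 * π) / 8 = π - 3 * π / 8 + 2 * π by ring,
      show (2 * 3 + 1) * π / 8 = π - π / 8 by ring, sin_add_two_pi, sin_pi_sub, sin_pi_sub,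
      sin_three_pi_div_eight]
    field_simp
    ring

lemma B₃_eq (k : ℕ) : B₃ k = (-1) ^ (k / 4) * (2 * √2) := by
  induction k using Nat.strong_induction_on with
  | _ k ih =>
    rcases lt_or_ge k 4 with hk | hk
    · rw [Nat.div_eq_of_lt hk, pow_zero, one_mul, B₃_of_lt_four hk]
    · obtain ⟨m, rfl⟩ := Nat.exists_eq_add_of_le' hk
      rw [B₃_add_four, ih m (by omega), show (m + 4) / 4 = m / 4 + 1 by omega, pow_succ]
      ring

noncomputable def partialThetaTerm (q : ℂ) (k : ℕ) : ℂ :=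
  (-1) ^ (k + k / 4) * q ^ (k * (k + 1) / 2)

lemma neg_one_pow_mul_B₃_mul (q : ℂ) (k : ℕ) :
    (-1) ^ k * (B₃ k : ℂ) * q ^ (k * (k + 1) / 2) = 2 * (√2 : ℂ) * partialThetaTerm q k := by
  rw [B₃_eq, partialThetaTerm, pow_add]
  push_cast
  ring

lemma summable_partialThetaTerm {q : ℂ} (hq : ‖q‖ < 1) : Summable (partialThetaTerm q) := by
  refine Summable.of_norm_bounded (summable_geometric_of_lt_one (norm_nonneg q) hq) fun k => ?_
  rw [partialThetaTerm, norm_mul, norm_pow, norm_neg, norm_one, one_pow, one_mul, norm_pow]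
  refine pow_le_pow_of_le_one (norm_nonneg q) hq.le ?_
  rw [Nat.le_div_iff_mul_le two_pos]
  rcases k with _ | k
  · simp
  · nlinarith

lemma partialThetaTerm_eq_zpow (q : ℂ) {k : ℕ} {j e : ℤ} (hT : (k : ℤ) * (k + 1) = 2 * e)
    (hsign : Even (((k + k / 4 : ℕ) : ℤ) - j)) : partialThetaTerm q k = (-1) ^ j * q ^ e := by
  lift e to ℕ using by nlinarith
  have hT' : k * (k + 1) / 2 = e := by
    rw [show k * (k + 1) = 2 * e by exact_mod_cast hT, Nat.mul_div_cancel_left _ two_pos]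
  rw [partialThetaTerm, hT', zpow_natCast, ← Int.cast_negOnePow_natCast, ← Int.cast_negOnePow,
    (Int.negOnePow_eq_iff _ _).2 hsign]

lemma neg_partialThetaTerm_eq_mul_zpow (q : ℂ) {k : ℕ} {j e : ℤ} (he : 0 ≤ e)
    (hT : (k : ℤ) * (k + 1) = 2 * (e + 1)) (hsign : Even (((k + k / 4 : ℕ) : ℤ) - j - 1)) :
    -partialThetaTerm q k = q * ((-1) ^ j * q ^ e) := by
  lift e to ℕ using he
  rw [partialThetaTerm_eq_zpow q (j := j + 1) (e := ((e + 1 : ℕ) : ℤ)) (by push_cast; exact hT)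
    (by rwa [← sub_sub]), zpow_add_one₀ (by norm_num), zpow_natCast, zpow_natCast, pow_succ]
  ring

lemma tsum_int_eq_tsum_neg_add_tsum_add_one {M : Type*} [AddCommMonoid M] [TopologicalSpace M]
    [ContinuousAdd M] [T2Space M] {f : ℤ → M} (h₁ : Summable fun n : ℕ => f (-n))
    (h₂ : Summable fun n : ℕ => f (n + 1)) :
    ∑' j, f j = ∑' n : ℕ, f (-n) + ∑' n : ℕ, f (n + 1) := by
  rw [← (Equiv.neg ℤ).tsum_eq]
  simpa only [Equiv.neg_apply, neg_neg] using
    tsum_of_nat_of_neg_add_one (f := fun j => f (-j)) h₁ (by simpa only [neg_neg] using h₂)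

lemma tsum_eq_tsum_four_mul_add {M : Type*} [AddCommGroup M] [UniformSpace M]
    [IsUniformAddGroup M] [CompleteSpace M] [T0Space M] {f : ℕ → M} (hf : Summable f) :
    ∑' n, f n = ∑' n, f (4 * n) + ∑' n, f (4 * n + 1) + ∑' n, f (4 * n + 2) +
      ∑' n, f (4 * n + 3) := by
  rw [Nat.sumByResidueClasses hf 4]
  change ∑ r : Fin 4, _ = _
  simp only [Fin.sum_univ_four, add_comm _ (4 * _)]
  rfl

lemma tsum_partialThetaTerm {q : ℂ} (hq : ‖q‖ < 1) :
    ∑' k, partialThetaTerm q k = ∑' j : ℤ, (-1) ^ j * q ^ (8 * j ^ 2 - 2 * j) -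
      q * ∑' j : ℤ, (-1) ^ j * q ^ (8 * j ^ 2 - 6 * j) := by
  have hsum := summable_partialThetaTerm hq
  have hres (r : ℕ) : Summable fun n => partialThetaTerm q (4 * n + r) :=
    hsum.comp_injective fun a b h => by omega
  have h0 (n : ℕ) : partialThetaTerm q (4 * n) =
      (-1) ^ (-(n : ℤ)) * q ^ (8 * (-(n : ℤ)) ^ 2 - 2 * -(n : ℤ)) :=
    partialThetaTerm_eq_zpow q (by push_cast; ring) (Int.even_iff.2 (by omega))
  have h3 (n : ℕ) : partialThetaTerm q (4 * n + 3) =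
      (-1) ^ ((n : ℤ) + 1) * q ^ (8 * ((n : ℤ) + 1) ^ 2 - 2 * ((n : ℤ) + 1)) :=
    partialThetaTerm_eq_zpow q (by push_cast; ring) (Int.even_iff.2 (by omega))
  have h1 (n : ℕ) : -partialThetaTerm q (4 * n + 1) =
      q * ((-1) ^ (-(n : ℤ)) * q ^ (8 * (-(n : ℤ)) ^ 2 - 6 * -(n : ℤ))) :=
    neg_partialThetaTerm_eq_mul_zpow q (by nlinarith) (by push_cast; ring)
      (Int.even_iff.2 (by omega))
  have h2 (n : ℕ) : -partialThetaTerm q (4 * n + 2) =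
      q * ((-1) ^ ((n : ℤ) + 1) * q ^ (8 * ((n : ℤ) + 1) ^ 2 - 6 * ((n : ℤ) + 1))) :=
    neg_partialThetaTerm_eq_mul_zpow q (by nlinarith) (by push_cast; ring)
      (Int.even_iff.2 (by omega))
  rw [← tsum_mul_left,
    tsum_int_eq_tsum_neg_add_tsum_add_one ((hres 0).congr h0) ((hres 3).congr h3),
    tsum_int_eq_tsum_neg_add_tsum_add_one ((hres 1).neg.congr h1) ((hres 2).neg.congr h2),
    tsum_eq_tsum_four_mul_add hsum]
  simp only [← h0, ← h1, ← h2, ← h3, tsum_neg]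
  ring

theorem stmt_12 (q : ℂ) (hq : ‖q‖ < 1) :
    ∑' k : ℕ, (-1) ^ k * (B₃ k : ℂ) * q ^ (k * (k + 1) / 2) =
      2 * (Real.sqrt 2 : ℂ) *
        ((∑' j : ℤ, (-1) ^ j * q ^ (8 * j ^ 2 - 2 * j)) -
          q * ∑' j : ℤ, (-1) ^ j * q ^ (8 * j ^ 2 - 6 * j)) := by
  simp_rw [neg_one_pow_mul_B₃_mul]
  rw [tsum_mul_left, tsum_partialThetaTerm hq]
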